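/- arXiv:2108.06694 — 5 statements merged into one kernel-verified Lean document; each statement's English description precedes it below -/
import Mathlib

section
/- Let f : ℝ → ℝ be Borel measurable and let 0 ≤ s ≤ t. If the random variables f(W_t) and f(2W_s − W_t) are integrable, then E[f(2W_s − W_t) | 𝓕_s] = E[f(W_t) | 𝓕_s] almost surely; in particular, E[f(W_t − 2W_s)] = E[f(2W_s − W_t)] = E[f(W_t)]. -/
open MeasureTheory ProbabilityTheory Real NNReal

/-- A standard one-dimensional Brownian motion `W` on a probability space `(Ω, P)`:
`W 0 = 0` a.s., increments `W t - W s` (for `s ≤ t`) are centered Gaussian with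
variance `t - s` and independent of the natural filtration up to time `s`, and
almost every sample path is continuous. -/
structure IsStandardBM {Ω : Type} [MeasurableSpace Ω]
    (P : Measure Ω) (W : ℝ≥0 → Ω → ℝ) : Prop where
  sm : ∀ t, StronglyMeasurable (W t)
  start : ∀ᵐ ω ∂P, W 0 ω = 0
  indep : ∀ s t : ℝ≥0, s ≤ t →
    Indep (⨆ u ∈ Set.Iic s, MeasurableSpace.comap (W u) inferInstance)
      (MeasurableSpace.comap (fun ω => W t ω - W s ω) inferInstance) P
  gauss : ∀ s t : ℝ≥0, s ≤ t →
    P.map (fun ω => W t ω - W s ω) = gaussianReal 0 (t - s)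
  contPaths : ∀ᵐ ω ∂P, Continuous fun t : ℝ≥0 => W t ω

lemma my_gaussian_neg (v : ℝ≥0) :
    (gaussianReal 0 v).map Neg.neg = gaussianReal 0 v := by
  have h : (Neg.neg : ℝ → ℝ) = ((-1 : ℝ) * ·) := by funext x; ring
  rw [h, gaussianReal_map_const_mul]
  have : (⟨(-1 : ℝ)^2, sq_nonneg _⟩ : ℝ≥0) = 1 := by ext; norm_num
  rw [mul_zero]; congr 1; ext; simp

lemma key_integral_neg {Ω : Type} [m0 : MeasurableSpace Ω] (P : Measure Ω) [IsProbabilityMeasure P]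
    {V X : Ω → ℝ} (hV : Measurable V) (hX : Measurable X) (hVX : IndepFun V X P)
    (hsymV : (P.map V).map Neg.neg = P.map V)
    (hsymX : (P.map X).map Neg.neg = P.map X)
    {f : ℝ → ℝ} (hf : Measurable f) :
    ∫ ω, f (X ω - V ω) ∂P = ∫ ω, f (V ω - X ω) ∂P := by
  have hmap : P.map (fun ω => (V ω, X ω)) = (P.map V).prod (P.map X) :=
    (indepFun_iff_map_prod_eq_prod_map_map hV.aemeasurable hX.aemeasurable).mp hVX
  have h1 : ∫ ω, f (X ω - V ω) ∂P = ∫ p : ℝ × ℝ, f (p.2 - p.1) ∂((P.map V).prod (P.map X)) := by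
    rw [← hmap, integral_map (hV.prodMk hX).aemeasurable]
    exact (hf.comp (measurable_snd.sub measurable_fst)).aestronglyMeasurable
  have h2 : ∫ ω, f (V ω - X ω) ∂P = ∫ p : ℝ × ℝ, f (p.1 - p.2) ∂((P.map V).prod (P.map X)) := by
    rw [← hmap, integral_map (hV.prodMk hX).aemeasurable]
    exact (hf.comp (measurable_fst.sub measurable_snd)).aestronglyMeasurable
  rw [h1, h2]
  conv_rhs => rw [← hsymV, ← hsymX]
  rw [Measure.map_prod_map _ _ measurable_neg measurable_neg,
    integral_map (measurable_neg.prodMap measurable_neg).aemeasurable]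
  · simp only [Prod.map, neg_sub_neg]
  · exact (hf.comp (measurable_fst.sub measurable_snd)).aestronglyMeasurable

lemma key_setIntegral {Ω : Type} {m : MeasurableSpace Ω} [m0 : MeasurableSpace Ω]
    (P : Measure Ω) [IsProbabilityMeasure P]
    (hm : m ≤ m0) {V X : Ω → ℝ}
    (hV : Measurable[m] V) (hX : Measurable X)
    (hindep : Indep m (MeasurableSpace.comap X inferInstance) P)
    (hsym : (P.map X).map Neg.neg = P.map X)
    {f : ℝ → ℝ} (hf : Measurable f) {A : Set Ω} (hA : MeasurableSet[m] A) :
    ∫ ω in A, f (V ω - X ω) ∂P = ∫ ω in A, f (V ω + X ω) ∂P := by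
  set Z : Ω → ℝ × ℝ := fun ω => (A.indicator (fun _ => (1:ℝ)) ω, V ω) with hZdef
  have hZm : Measurable[m] Z := (measurable_const.indicator hA).prodMk hV
  have hZ : Measurable Z := hZm.mono hm le_rfl
  have hZX : IndepFun Z X P := by
    rw [IndepFun_iff_Indep]
    exact indep_of_indep_of_le_left hindep hZm.comap_le
  have hmap : P.map (fun ω => (Z ω, X ω)) = (P.map Z).prod (P.map X) :=
    (indepFun_iff_map_prod_eq_prod_map_map hZ.aemeasurable hX.aemeasurable).mp hZX
  have hAm : MeasurableSet A := hm A hA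
  have key : ∀ g : ℝ → ℝ → ℝ, Measurable (fun p : ℝ × ℝ => g p.1 p.2) →
      ∫ ω, A.indicator (fun _ => (1:ℝ)) ω * g (V ω) (X ω) ∂P
        = ∫ p : (ℝ × ℝ) × ℝ, p.1.1 * g p.1.2 p.2 ∂((P.map Z).prod (P.map X)) := by
    intro g hg
    rw [← hmap]
    rw [integral_map (hZ.prodMk hX).aemeasurable]
    · exact ((measurable_fst.comp measurable_fst).mul
        (hg.comp ((measurable_snd.comp measurable_fst).prodMk measurable_snd))).aestronglyMeasurable
  have hind : ∀ h : Ω → ℝ, (fun ω => A.indicator (fun _ => (1:ℝ)) ω * h ω) = A.indicator h := by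
    intro h; funext ω
    by_cases hω : ω ∈ A <;> simp [hω]
  have e1 : ∫ ω in A, f (V ω - X ω) ∂P
      = ∫ p : (ℝ × ℝ) × ℝ, p.1.1 * f (p.1.2 - p.2) ∂((P.map Z).prod (P.map X)) := by
    rw [← integral_indicator hAm, ← hind fun ω => f (V ω - X ω)]
    exact key (fun a b => f (a - b)) (hf.comp (measurable_fst.sub measurable_snd))
  have e2 : ∫ ω in A, f (V ω + X ω) ∂P
      = ∫ p : (ℝ × ℝ) × ℝ, p.1.1 * f (p.1.2 + p.2) ∂((P.map Z).prod (P.map X)) := by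
    rw [← integral_indicator hAm, ← hind fun ω => f (V ω + X ω)]
    exact key (fun a b => f (a + b)) (hf.comp (measurable_fst.add measurable_snd))
  rw [e1, e2]
  have hid : P.map Z = Measure.map id (P.map Z) := Measure.map_id.symm
  conv_rhs => rw [← hsym, hid]
  rw [Measure.map_prod_map _ _ measurable_id measurable_neg,
    integral_map (measurable_id.prodMap measurable_neg).aemeasurable]
  · simp only [Prod.map, id_eq]
    simp_rw [← sub_eq_add_neg]
  · exact ((measurable_fst.comp measurable_fst).mul
      (hf.comp ((measurable_snd.comp measurable_fst).add measurable_snd))).aestronglyMeasurable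

/-- **Lemma 1.** For Borel measurable `f : ℝ → ℝ` and `s ≤ t`, if
`f (W t)` and `f (2 W s - W t)` are integrable, then
`E[f (2 W s - W t) | 𝓕 s] = E[f (W t) | 𝓕 s]` a.s.; in particular
`E[f (W t - 2 W s)] = E[f (2 W s - W t)] = E[f (W t)]`. -/
theorem condexp_reflected_eq
    {Ω : Type} [MeasurableSpace Ω] (P : Measure Ω) [IsProbabilityMeasure P]
    (W : ℝ≥0 → Ω → ℝ) (hW : IsStandardBM P W)
    (f : ℝ → ℝ) (hf : Measurable f) (s t : ℝ≥0) (hst : s ≤ t)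
    (h1 : Integrable (fun ω => f (W t ω)) P)
    (h2 : Integrable (fun ω => f (2 * W s ω - W t ω)) P) :
    (P[(fun ω => f (2 * W s ω - W t ω)) | (Filtration.natural W hW.sm) s]
        =ᵐ[P] P[(fun ω => f (W t ω)) | (Filtration.natural W hW.sm) s]) ∧
    (∫ ω, f (W t ω - 2 * W s ω) ∂P) = (∫ ω, f (2 * W s ω - W t ω) ∂P) ∧
    (∫ ω, f (2 * W s ω - W t ω) ∂P) = ∫ ω, f (W t ω) ∂P := by
  have hm : (Filtration.natural W hW.sm) s ≤ _ := (Filtration.natural W hW.sm).le s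
  have hXm : Measurable fun ω => W t ω - W s ω :=
    (hW.sm t).measurable.sub (hW.sm s).measurable
  have hsymX : (P.map fun ω => W t ω - W s ω).map Neg.neg
      = P.map fun ω => W t ω - W s ω := by
    rw [hW.gauss s t hst, my_gaussian_neg]
  have hindep : Indep ((Filtration.natural W hW.sm) s)
      (MeasurableSpace.comap (fun ω => W t ω - W s ω) inferInstance) P := hW.indep s t hst
  have hWsm : Measurable[(Filtration.natural W hW.sm) s] (W s) := by
    have hle : MeasurableSpace.comap (W s) inferInstance ≤ (Filtration.natural W hW.sm) s :=
      le_iSup₂ (f := fun j (_ : j ≤ s) => MeasurableSpace.comap (W j) inferInstance) s le_rfl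
    exact fun _ ht => hle _ ⟨_, ht, rfl⟩
  have ef1 : (fun ω => f (2 * W s ω - W t ω))
      = fun ω => f (W s ω - (W t ω - W s ω)) := by funext ω; congr 1; ring
  have ef2 : (fun ω => f (W t ω)) = fun ω => f (W s ω + (W t ω - W s ω)) := by
    funext ω; congr 1; ring
  have hsetEq : ∀ A : Set Ω, MeasurableSet[(Filtration.natural W hW.sm) s] A →
      ∫ ω in A, f (2 * W s ω - W t ω) ∂P = ∫ ω in A, f (W t ω) ∂P := by
    intro A hA
    calc ∫ ω in A, f (2 * W s ω - W t ω) ∂P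
        = ∫ ω in A, f (W s ω - (W t ω - W s ω)) ∂P := by rw [ef1]
      _ = ∫ ω in A, f (W s ω + (W t ω - W s ω)) ∂P :=
          key_setIntegral P hm hWsm hXm hindep hsymX hf hA
      _ = ∫ ω in A, f (W t ω) ∂P := by rw [← ef2]
  have main : P[(fun ω => f (2 * W s ω - W t ω)) | (Filtration.natural W hW.sm) s]
      =ᵐ[P] P[(fun ω => f (W t ω)) | (Filtration.natural W hW.sm) s] :=
    ae_eq_condExp_of_forall_setIntegral_eq hm h1
      (fun A _ _ => integrable_condExp.integrableOn)
      (fun A hA _ => by rw [setIntegral_condExp hm h2 hA]; exact hsetEq A hA)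
      stronglyMeasurable_condExp.aestronglyMeasurable
  refine ⟨main, ?_, ?_⟩
  · -- ∫ f (Wt - 2 Ws) = ∫ f (2 Ws - Wt)
    have hWs : Measurable (W s) := (hW.sm s).measurable
    have hsymV : (P.map (W s)).map Neg.neg = P.map (W s) := by
      have h0 : P.map (W s) = gaussianReal 0 (s - 0) := by
        rw [← hW.gauss 0 s zero_le]
        apply Measure.map_congr
        filter_upwards [hW.start] with ω hω
        rw [hω, sub_zero]
      rw [h0, my_gaussian_neg]
    have hVX : IndepFun (W s) (fun ω => W t ω - W s ω) P := by
      rw [IndepFun_iff_Indep]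
      exact indep_of_indep_of_le_left hindep hWsm.comap_le
    have := key_integral_neg P hWs hXm hVX hsymV hsymX hf
    calc ∫ ω, f (W t ω - 2 * W s ω) ∂P
        = ∫ ω, f ((W t ω - W s ω) - W s ω) ∂P := by
          congr 1; funext ω; congr 1; ring
      _ = ∫ ω, f (W s ω - (W t ω - W s ω)) ∂P := this
      _ = ∫ ω, f (2 * W s ω - W t ω) ∂P := by
          congr 1; funext ω; congr 1; ring
  · have := hsetEq Set.univ MeasurableSet.univ
    simpa using this
end

section
/- Let 0 ≤ s ≤ t and let s_1, …, s_n be finitely many times with s_i ≤ s for every i. Then the ℝ^{n+1}-valued random vectors (W_t, W_{s_1}, …, W_{s_n}) and (2W_s − W_t, W_{s_1}, …, W_{s_n}) have the same distribution. -/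
open MeasureTheory ProbabilityTheory Real NNReal

/-- For `s ≤ t` and finitely many times `s₁, …, sₙ ≤ s`, the random
vectors `(W t, W s₁, …, W sₙ)` and `(2 W s - W t, W s₁, …, W sₙ)` have the same
distribution. -/
theorem map_reflected_vector_eq
    {Ω : Type} [MeasurableSpace Ω] (P : Measure Ω) [IsProbabilityMeasure P]
    (W : ℝ≥0 → Ω → ℝ) (hW : IsStandardBM P W)
    (s t : ℝ≥0) (hst : s ≤ t) (n : ℕ) (τ : Fin n → ℝ≥0) (hτ : ∀ i, τ i ≤ s) :
    P.map (fun ω => (Fin.cons (W t ω) (fun i => W (τ i) ω) : Fin (n + 1) → ℝ)) =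
      P.map (fun ω =>
        (Fin.cons (2 * W s ω - W t ω) (fun i => W (τ i) ω) : Fin (n + 1) → ℝ)) := by
  classical
  have hWm : ∀ u, Measurable (W u) := fun u => (hW.sm u).measurable
  set D : Ω → ℝ := fun ω => W t ω - W s ω with hD
  set D' : Ω → ℝ := fun ω => -(W t ω - W s ω) with hD'
  set Y : Ω → (Fin (n + 1) → ℝ) :=
    fun ω => Fin.cons (W s ω) (fun i => W (τ i) ω) with hYdef
  have hDm : Measurable D := (hWm t).sub (hWm s)
  have hD'm : Measurable D' := hDm.neg
  have hYle : MeasurableSpace.comap Y MeasurableSpace.pi ≤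
      ⨆ u ∈ Set.Iic s, MeasurableSpace.comap (W u) inferInstance := by
    rw [← measurable_iff_comap_le]
    letI : MeasurableSpace Ω := ⨆ u ∈ Set.Iic s, MeasurableSpace.comap (W u) inferInstance
    refine measurable_pi_iff.mpr fun i => ?_
    refine Fin.cases ?_ ?_ i
    · have h : MeasurableSpace.comap (W s) inferInstance ≤
          ⨆ u ∈ Set.Iic s, MeasurableSpace.comap (W u) inferInstance :=
        le_biSup (fun u => MeasurableSpace.comap (W u) inferInstance)
          (Set.mem_Iic.mpr le_rfl)
      exact measurable_iff_comap_le.mpr h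
    · intro j
      have h : MeasurableSpace.comap (W (τ j)) inferInstance ≤
          ⨆ u ∈ Set.Iic s, MeasurableSpace.comap (W u) inferInstance :=
        le_biSup (fun u => MeasurableSpace.comap (W u) inferInstance)
          (Set.mem_Iic.mpr (hτ j))
      exact measurable_iff_comap_le.mpr h
  have hYm : Measurable Y := by
    rw [hYdef]
    refine measurable_pi_iff.mpr fun i => ?_
    refine Fin.cases ?_ ?_ i
    · simp only [Fin.cons_zero]; exact hWm s
    · intro j; simp only [Fin.cons_succ]; exact hWm (τ j)
  -- independence
  have hindep : IndepFun D Y P := by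
    rw [IndepFun_iff_Indep]
    refine Indep.symm ?_
    exact indep_of_indep_of_le_left (hW.indep s t hst) hYle
  have hindep' : IndepFun D' Y P := hindep.comp measurable_neg measurable_id
  -- equality of laws of D and D'
  have hlawD : P.map D = gaussianReal 0 (t - s) := hW.gauss s t hst
  have hlawD' : P.map D' = P.map D := by
    have : D' = (fun x : ℝ => (-1 : ℝ) * x) ∘ D := by
      funext ω; simp [hD', hD]
    have hneg : Measurable fun x : ℝ => (-1 : ℝ) * x := by fun_prop
    rw [this, ← Measure.map_map hneg hDm, hlawD,
      gaussianReal_map_const_mul (-1 : ℝ)]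
    norm_num
  -- joint laws
  have hpair : P.map (fun ω => (D ω, Y ω)) = (P.map D).prod (P.map Y) :=
    (indepFun_iff_map_prod_eq_prod_map_map hDm.aemeasurable hYm.aemeasurable).mp hindep
  have hpair' : P.map (fun ω => (D' ω, Y ω)) = (P.map D').prod (P.map Y) :=
    (indepFun_iff_map_prod_eq_prod_map_map hD'm.aemeasurable hYm.aemeasurable).mp hindep'
  -- the common map g
  set g : ℝ × (Fin (n + 1) → ℝ) → (Fin (n + 1) → ℝ) :=
    fun p => Fin.cons (p.2 0 + p.1) (fun i => p.2 i.succ) with hg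
  have hgm : Measurable g := by
    rw [hg]
    refine measurable_pi_iff.mpr fun i => ?_
    refine Fin.cases ?_ ?_ i
    · simp only [Fin.cons_zero]
      exact ((measurable_pi_apply 0).comp measurable_snd).add measurable_fst
    · intro j
      simp only [Fin.cons_succ]
      exact (measurable_pi_apply j.succ).comp measurable_snd
  have hvec1 : (fun ω => (Fin.cons (W t ω) (fun i => W (τ i) ω) : Fin (n + 1) → ℝ)) =
      g ∘ (fun ω => (D ω, Y ω)) := by
    funext ω
    simp only [Function.comp_apply, hg, hYdef, hD, Fin.cons_zero, Fin.cons_succ]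
    ring_nf
  have hvec2 : (fun ω => (Fin.cons (2 * W s ω - W t ω) (fun i => W (τ i) ω) :
      Fin (n + 1) → ℝ)) = g ∘ (fun ω => (D' ω, Y ω)) := by
    funext ω
    simp only [Function.comp_apply, hg, hYdef, hD', Fin.cons_zero, Fin.cons_succ]
    ring_nf
  have hpm : Measurable (fun ω => (D ω, Y ω)) := hDm.prodMk hYm
  have hpm' : Measurable (fun ω => (D' ω, Y ω)) := hD'm.prodMk hYm
  calc P.map (fun ω => (Fin.cons (W t ω) (fun i => W (τ i) ω) : Fin (n + 1) → ℝ))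
      = (P.map (fun ω => (D ω, Y ω))).map g := by
        rw [hvec1, ← Measure.map_map hgm hpm]
    _ = ((P.map D).prod (P.map Y)).map g := by rw [hpair]
    _ = ((P.map D').prod (P.map Y)).map g := by rw [hlawD']
    _ = (P.map (fun ω => (D' ω, Y ω))).map g := by rw [hpair']
    _ = P.map (fun ω => (Fin.cons (2 * W s ω - W t ω) (fun i => W (τ i) ω) :
        Fin (n + 1) → ℝ)) := by rw [hvec2, ← Measure.map_map hgm hpm']
end

section
/- If f : ℝ → ℝ is Lebesgue-measurable and satisfies the quadratic functional equation, then there exists a constant a ∈ ℝ (namely a = f(1)) such that f(x) = a·x² for all x ∈ ℝ. -/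
open MeasureTheory Filter Topology Pointwise

/-- A measurable (a.e.-measurable) additive function `ℝ → ℝ` is linear. -/
private lemma additive_aemeasurable_linear (g : ℝ → ℝ)
    (hg : AEMeasurable g (volume : Measure ℝ))
    (hadd : ∀ a b : ℝ, g (a + b) = g a + g b) :
    ∀ x : ℝ, g x = g 1 * x := by
  -- package g as an AddMonoidHom
  set φ : ℝ →+ ℝ := AddMonoidHom.mk' g hadd with hφ
  have hφap : ∀ x : ℝ, φ x = g x := fun x => rfl
  have hsub : ∀ a b : ℝ, g (a - b) = g a - g b := fun a b => map_sub φ a b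
  have hnat : ∀ (n : ℕ) (x : ℝ), g ((n : ℝ) * x) = (n : ℝ) * g x := by
    intro n x
    have := map_nsmul φ n x
    simpa [nsmul_eq_mul, hφap] using this
  have hrat : ∀ q : ℚ, g (q : ℝ) = g 1 * (q : ℝ) := by
    intro q
    have := map_ratCast_smul φ ℝ ℝ q 1
    simp only [Rat.smul_def, smul_eq_mul, mul_one, hφap] at this
    rw [this, mul_comm]
  -- a measurable representative
  set g' := hg.mk g with hg'def
  have hg'meas : Measurable g' := hg.measurable_mk
  have hae : g =ᵐ[volume] g' := hg.ae_eq_mk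
  -- a measurable co-null set where g = g'
  set t : Set ℝ := toMeasurable volume {x | g x = g' x}ᶜ with ht
  have htmeas : MeasurableSet t := measurableSet_toMeasurable _ _
  have htnull : volume t = 0 := by
    rw [ht, measure_toMeasurable]
    exact hae
  have htc : ∀ x ∈ tᶜ, g x = g' x := by
    intro x hx
    by_contra hgx
    exact hx (subset_toMeasurable _ _ hgx)
  -- find a bound N on a set of positive measure
  obtain ⟨N, hN⟩ : ∃ N : ℕ, 0 < volume ({y | |g' y| ≤ (N : ℝ)} ∩ Set.Icc (0:ℝ) 1 ∩ tᶜ) := by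
    by_contra h
    push_neg at h
    simp only [le_zero_iff] at h
    have hcover : Set.Icc (0:ℝ) 1 \ t ⊆
        ⋃ N : ℕ, ({y | |g' y| ≤ (N : ℝ)} ∩ Set.Icc (0:ℝ) 1 ∩ tᶜ) := by
      intro y hy
      obtain ⟨n, hn⟩ := exists_nat_ge (|g' y|)
      exact Set.mem_iUnion.2 ⟨n, ⟨⟨hn, hy.1⟩, hy.2⟩⟩
    have h1 : volume (Set.Icc (0:ℝ) 1 \ t) = 0 :=
      le_antisymm (le_trans (measure_mono hcover) (le_of_eq (measure_iUnion_null h))) zero_le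
    have h2 : volume (Set.Icc (0:ℝ) 1 \ t) = volume (Set.Icc (0:ℝ) 1) :=
      measure_diff_null htnull
    rw [h2, Real.volume_Icc] at h1
    norm_num at h1
  set E : Set ℝ := {y | |g' y| ≤ (N : ℝ)} ∩ Set.Icc (0:ℝ) 1 ∩ tᶜ with hE
  have hEmeas : MeasurableSet E := by
    apply MeasurableSet.inter _ htmeas.compl
    apply MeasurableSet.inter _ measurableSet_Icc
    exact measurableSet_le (hg'meas.abs) measurable_const
  have hEbound : ∀ y ∈ E, |g y| ≤ (N : ℝ) := by
    intro y hy
    rw [htc y hy.2]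
    exact hy.1.1
  -- Steinhaus: E - E is a neighborhood of 0
  have hnhds : E - E ∈ 𝓝 (0 : ℝ) :=
    MeasureTheory.Measure.sub_mem_nhds_zero_of_addHaar_pos volume E hEmeas hN
  obtain ⟨ε, hε, hball⟩ := Metric.mem_nhds_iff.1 hnhds
  -- bound on g near 0
  have hgsmall : ∀ z : ℝ, |z| < ε → |g z| ≤ 2 * N := by
    intro z hz
    have hzE : z ∈ E - E := hball (by simpa [Metric.mem_ball, Real.dist_eq] using hz)
    obtain ⟨a, ha, b, hb, hab⟩ := Set.mem_sub.1 hzE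
    have hz' : g z = g a - g b := by rw [← hab, hsub]
    rw [hz']
    calc |g a - g b| ≤ |g a| + |g b| := abs_sub _ _
      _ ≤ (N : ℝ) + N := add_le_add (hEbound a ha) (hEbound b hb)
      _ = 2 * N := by ring
  -- conclude linearity
  intro x
  set c := g 1 with hc
  set M : ℝ := 2 * N + |c| * ε with hM
  have key : ∀ k : ℕ, |g x - c * x| ≤ M / (k + 1) := by
    intro k
    have hk : (0:ℝ) < (k : ℝ) + 1 := by positivity
    have hδ : 0 < ε / ((k : ℝ) + 1) := by positivity
    obtain ⟨q, hq1, hq2⟩ := exists_rat_btwn (show x - ε / ((k:ℝ)+1) < x by linarith)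
    set u : ℝ := x - (q : ℝ) with hu
    have hu1 : 0 < u := by simp only [hu]; linarith
    have hu2 : u < ε / ((k:ℝ)+1) := by simp only [hu]; linarith
    have hgu : g x - c * x = g u - c * u := by
      have hx' : g x = g u + g (q : ℝ) := by
        have huq : u + (q : ℝ) = x := by simp [hu]
        rw [← huq, hadd]
      rw [hx', hrat q]; simp only [hu]; ring
    have hscale : ((k:ℝ)+1) * (g u - c * u) = g (((k:ℝ)+1) * u) - c * (((k:ℝ)+1) * u) := by
      have h' := hnat (k+1) u
      push_cast at h'
      rw [h']; ring
    have hlt : |((k:ℝ)+1) * u| < ε := by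
      rw [abs_of_pos (by positivity)]
      calc ((k:ℝ)+1) * u < ((k:ℝ)+1) * (ε / ((k:ℝ)+1)) := by
            exact mul_lt_mul_of_pos_left hu2 hk
        _ = ε := by field_simp
    have hb1 : |g (((k:ℝ)+1) * u)| ≤ 2 * N := hgsmall _ hlt
    have hb2 : |c * (((k:ℝ)+1) * u)| ≤ |c| * ε := by
      rw [abs_mul]
      exact mul_le_mul_of_nonneg_left (le_of_lt hlt) (abs_nonneg c)
    have hbound : ((k:ℝ)+1) * |g u - c * u| ≤ M := by
      rw [← abs_of_pos hk, ← abs_mul, hscale]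
      calc |g (((k:ℝ)+1) * u) - c * (((k:ℝ)+1) * u)|
          ≤ |g (((k:ℝ)+1) * u)| + |c * (((k:ℝ)+1) * u)| := abs_sub _ _
        _ ≤ 2 * N + |c| * ε := add_le_add hb1 hb2
    rw [hgu, le_div_iff₀ hk, mul_comm]
    exact hbound
  have hlim : Tendsto (fun k : ℕ => M / ((k:ℝ) + 1)) atTop (𝓝 0) := by
    have := tendsto_one_div_add_atTop_nhds_zero_nat.const_mul M
    simpa [div_eq_mul_inv, mul_comm, mul_assoc, one_div] using this
  have habs : |g x - c * x| ≤ 0 := ge_of_tendsto hlim (Eventually.of_forall key)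
  have : g x - c * x = 0 := abs_eq_zero.1 (le_antisymm habs (abs_nonneg _))
  linarith

/-- If `f : ℝ → ℝ` is Lebesgue-measurable and satisfies the quadratic
functional equation `f (x + y) + f (x - y) = 2 f x + 2 f y`, then there is a constant
`a` (namely `a = f 1`) with `f x = a * x ^ 2` for all `x`. -/
theorem quadratic_funcEq_eq_sq
    (f : ℝ → ℝ) (hf : NullMeasurable f (volume : Measure ℝ))
    (hq : ∀ x y : ℝ, f (x + y) + f (x - y) = 2 * f x + 2 * f y) :
    ∃ a : ℝ, a = f 1 ∧ ∀ x : ℝ, f x = a * x ^ 2 := by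
  refine ⟨f 1, rfl, ?_⟩
  have h0 : f 0 = 0 := by have := hq 0 0; norm_num at this; linarith
  have key3 : ∀ x y z : ℝ, f (x+y+z) + f x + f y + f z = f (x+y) + f (y+z) + f (x+z) := by
    intro x y z
    have h1 := hq (x+y) z
    have h2 := hq (x+z) y
    have h3 := hq (y+z) x
    have h4 := hq x (y-z)
    have h5 := hq y (z-x)
    have h6 := hq z (x-y)
    have h7 := hq y z
    have h8 := hq z x
    have h9 := hq x y
    ring_nf at *
    linarith
  have hfae : AEMeasurable f volume := hf.aemeasurable
  have hlin : ∀ x y : ℝ, f (x+y) - f x - f y = (f (x+1) - f x - f 1) * y := by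
    intro x
    have haddg : ∀ a b : ℝ, f (x + (a+b)) - f x - f (a+b)
        = (f (x+a) - f x - f a) + (f (x+b) - f x - f b) := by
      intro a b
      have hk := key3 x a b
      have harg : x + (a + b) = x + a + b := by ring
      rw [harg]
      linarith
    have hmeas : AEMeasurable (fun y => f (x+y) - f x - f y) volume := by
      have h1 : AEMeasurable (fun y => f (x+y)) volume :=
        hfae.comp_quasiMeasurePreserving
          (measurePreserving_add_left volume x).quasiMeasurePreserving
      exact (h1.sub aemeasurable_const).sub hfae
    have := additive_aemeasurable_linear _ hmeas haddg
    intro y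
    simpa using this y
  intro x
  have e1 : 2 * f x = (f (x+1) - f x - f 1) * x := by
    have h2x := hq x x
    have hBxx := hlin x x
    simp only [sub_self] at h2x
    linarith
  have e2 : f (x+1) - f x - f 1 = (f (1+1) - 2 * f 1) * x := by
    have hB1x := hlin 1 x
    have hcomm : f (x+1) = f (1+x) := by rw [add_comm]
    rw [hcomm]
    linarith
  have e3 : f (1+1) = 4 * f 1 := by
    have := hq 1 1
    simp only [sub_self] at this
    linarith
  linear_combination e1 / 2 + (x / 2) * e2 + (x^2 / 2) * e3
end

section
/- If f : ℝ → ℝ is Lebesgue-measurable, strictly positive, and satisfies the D'Alembert functional equation, then there exists a constant λ ∈ ℝ such that f(x) = cosh(λx) = (e^{λx} + e^{−λx})/2 for all x ∈ ℝ. -/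
open MeasureTheory

open Pointwise in
private lemma cosh_exists {a : ℝ} (ha : 1 ≤ a) : ∃ μ : ℝ, 0 ≤ μ ∧ Real.cosh μ = a := by
  set s := Real.sqrt (a^2 - 1) with hs
  have hs0 : 0 ≤ s := Real.sqrt_nonneg _
  have hs2 : s ^ 2 = a^2 - 1 := Real.sq_sqrt (by nlinarith)
  have h1 : (0:ℝ) < a + s := by nlinarith
  refine ⟨Real.log (a + s), Real.log_nonneg (by nlinarith), ?_⟩
  rw [Real.cosh_log h1]
  have hinv : (a + s)⁻¹ = a - s := inv_eq_of_mul_eq_one_right (by nlinarith)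
  rw [hinv]; ring

private lemma cosh_inj {a b : ℝ} (ha : 0 ≤ a) (hb : 0 ≤ b)
    (h : Real.cosh a = Real.cosh b) : a = b := by
  have h1 : |a| ≤ |b| := Real.cosh_le_cosh.1 h.le
  have h2 : |b| ≤ |a| := Real.cosh_le_cosh.1 h.ge
  rw [abs_of_nonneg ha, abs_of_nonneg hb] at h1 h2
  linarith

section DAlembertAux
open Pointwise
variable (f : ℝ → ℝ) (hpos : ∀ x, 0 < f x)
  (hd : ∀ x y : ℝ, f (x + y) + f (x - y) = 2 * f x * f y)
include hpos hd

private lemma L1 : f 0 = 1 := by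
  have h := hd 0 0
  simp at h
  nlinarith [hpos 0]

private lemma L2 : ∀ x, f (-x) = f x := by
  intro x
  have h := hd 0 x
  have h0 := L1 f hpos hd
  simp at h
  rw [h0] at h
  linarith

private lemma L3 : ∀ x, f (2*x) = 2 * f x ^ 2 - 1 := by
  intro x
  have h0 := L1 f hpos hd
  have h := hd x x
  rw [sub_self, h0, two_mul] at h
  rw [two_mul]
  nlinarith

private lemma L4 : ∀ x, 1 ≤ f x := by
  intro a
  by_contra hlt
  push_neg at hlt
  set θ := Real.arccos (f a) with hθ
  have hfa1 : f a ≤ 1 := le_of_lt hlt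
  have hfa0 : 0 < f a := hpos a
  have hcos : Real.cos θ = f a := Real.cos_arccos (by linarith) hfa1
  have hθpos : 0 < θ := Real.arccos_pos.2 hlt
  have hθlt : θ < Real.pi / 2 := Real.arccos_lt_pi_div_two.2 hfa0
  have key : ∀ n : ℕ, f (2^n * a) = Real.cos (2^n * θ) := by
    intro n
    induction n with
    | zero => simpa using hcos.symm
    | succ n ih =>
      have h2 : (2:ℝ)^(n+1) * a = 2 * (2^n * a) := by rw [pow_succ]; ring
      have h2' : (2:ℝ)^(n+1) * θ = 2 * (2^n * θ) := by rw [pow_succ]; ring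
      rw [h2, L3 f hpos hd, ih, h2', Real.cos_two_mul]
  obtain ⟨n, hn⟩ := pow_unbounded_of_one_lt (Real.pi / 2 / θ) (by norm_num : (1:ℝ) < 2)
  have hex : ∃ n : ℕ, Real.pi / 2 < 2^n * θ := ⟨n, by
    have := (div_lt_iff₀ hθpos).1 hn
    linarith⟩
  classical
  set m := Nat.find hex with hm
  have hm1 : Real.pi / 2 < 2^m * θ := Nat.find_spec hex
  have hmpos : m ≠ 0 := by
    intro h0
    rw [h0] at hm1
    simp at hm1
    linarith
  obtain ⟨k, hk⟩ := Nat.exists_eq_succ_of_ne_zero hmpos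
  have hprev : ¬ (Real.pi / 2 < 2^k * θ) := Nat.find_min hex (by omega)
  push_neg at hprev
  have hle : 2^m * θ ≤ Real.pi := by
    have h2 : (2:ℝ)^m * θ = 2 * (2^k * θ) := by rw [hk, pow_succ]; ring
    rw [h2]; linarith
  have hnp : Real.cos (2^m * θ) ≤ 0 :=
    Real.cos_nonpos_of_pi_div_two_le_of_le (le_of_lt hm1) (by nlinarith [Real.pi_pos])
  have := key m
  nlinarith [hpos (2^m * a)]

private lemma L5 : ∀ x y, f (x+y) * f (x-y) = f x ^ 2 + f y ^ 2 - 1 := by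
  intro x y
  have h := hd (x+y) (x-y)
  have h1 : x + y + (x - y) = 2*x := by ring
  have h2 : x + y - (x - y) = 2*y := by ring
  rw [h1, h2, L3 f hpos hd, L3 f hpos hd] at h
  linarith

private lemma L6 : ∀ x y, f (x+y) ≤ 2 * f x * f y := by
  intro x y
  have h := hd x y
  linarith [hpos (x-y)]

private lemma L7 : ∀ t μ : ℝ, f t = Real.cosh μ →
    ∀ n : ℕ, f (n * t) = Real.cosh (n * μ) := by
  intro t μ ht
  have key : ∀ n : ℕ, (f (n * t) = Real.cosh (n * μ) ∧
      f ((n+1 : ℕ) * t) = Real.cosh ((n+1 : ℕ) * μ)) := by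
    intro n
    induction n with
    | zero =>
      constructor
      · simp [L1 f hpos hd]
      · simpa using ht
    | succ n ih =>
      obtain ⟨ih1, ih2⟩ := ih
      push_cast at ih1 ih2 ⊢
      refine ⟨ih2, ?_⟩
      have h := hd (((n:ℝ)+1) * t) t
      have e1 : ((n:ℝ)+1) * t + t = ((n:ℝ)+1+1) * t := by ring
      have e2 : ((n:ℝ)+1) * t - t = (n:ℝ) * t := by ring
      rw [e1, e2, ih1, ih2, ht] at h
      have hc : Real.cosh (((n:ℝ)+1) * μ + μ) + Real.cosh (((n:ℝ)+1) * μ - μ)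
          = 2 * Real.cosh (((n:ℝ)+1) * μ) * Real.cosh μ := by
        rw [Real.cosh_add, Real.cosh_sub]; ring
      have e3 : ((n:ℝ)+1) * μ + μ = ((n:ℝ)+1+1) * μ := by ring
      have e4 : ((n:ℝ)+1) * μ - μ = (n:ℝ) * μ := by ring
      rw [e3, e4] at hc
      linarith
  exact fun n => (key n).1


omit hd in
include hpos in
private lemma L8 (hf : NullMeasurable f (volume : Measure ℝ))
    (hL2 : ∀ x, f (-x) = f x) (hL6 : ∀ x y, f (x+y) ≤ 2 * f x * f y) :
    ∃ δ : ℝ, 0 < δ ∧ ∃ M : ℝ, 1 ≤ M ∧ ∀ z : ℝ, |z| ≤ δ → f z ≤ M := by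
  have hae : AEMeasurable f (volume : Measure ℝ) := hf.aemeasurable
  set g := hae.mk f with hg
  have hgm : Measurable g := hae.measurable_mk
  have hfg : f =ᵐ[volume] g := hae.ae_eq_mk
  set T := toMeasurable volume {x | f x ≠ g x} with hT
  have hTnull : volume T = 0 := by
    rw [hT, measure_toMeasurable]
    exact hfg
  have hTm : MeasurableSet T := measurableSet_toMeasurable _ _
  set E : ℕ → Set ℝ := fun N => (Set.Icc (0:ℝ) 1 ∩ {x | g x ≤ N}) \ T with hE
  have hEm : ∀ N, MeasurableSet (E N) :=
    fun N => ((measurableSet_Icc.inter (hgm measurableSet_Iic)).diff hTm)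
  have hcover : Set.Icc (0:ℝ) 1 \ T ⊆ ⋃ N, E N := by
    intro x hx
    obtain ⟨N, hN⟩ := exists_nat_ge (g x)
    exact Set.mem_iUnion.2 ⟨N, ⟨⟨hx.1, hN⟩, hx.2⟩⟩
  have hpos' : ∃ N, 0 < volume (E N) := by
    by_contra hall
    push_neg at hall
    simp only [le_zero_iff] at hall
    have hU : volume (⋃ N, E N) = 0 := measure_iUnion_null_iff.2 hall
    have hsub : Set.Icc (0:ℝ) 1 ⊆ (⋃ N, E N) ∪ T := by
      intro x hx
      by_cases hxT : x ∈ T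
      · exact Or.inr hxT
      · exact Or.inl (hcover ⟨hx, hxT⟩)
    have h4 : volume (Set.Icc (0:ℝ) 1) ≤ 0 := by
      calc volume (Set.Icc (0:ℝ) 1) ≤ volume ((⋃ N, E N) ∪ T) := measure_mono hsub
      _ ≤ volume (⋃ N, E N) + volume T := measure_union_le _ _
      _ = 0 := by rw [hU, hTnull]; simp
    rw [Real.volume_Icc, le_zero_iff, ENNReal.ofReal_eq_zero] at h4
    norm_num at h4
  obtain ⟨N, hN⟩ := hpos'
  have hst : E N - E N ∈ nhds (0:ℝ) :=
    MeasureTheory.Measure.sub_mem_nhds_zero_of_addHaar_pos volume (E N) (hEm N) hN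
  obtain ⟨ε, hε, hball⟩ := Metric.mem_nhds_iff.1 hst
  refine ⟨ε/2, by linarith, 2 * (N+1)^2, by nlinarith [Nat.cast_nonneg (α := ℝ) N], ?_⟩
  intro z hz
  have hzball : z ∈ Metric.ball (0:ℝ) ε := by
    simp only [Metric.mem_ball, Real.dist_eq, sub_zero]
    linarith
  obtain ⟨a, ha, b, hb, hab⟩ := hball hzball
  have hfa : f a ≤ N := by
    have : g a = f a := by
      by_contra hne
      exact ha.2 (subset_toMeasurable _ _ (by simpa [ne_comm] using hne))
    rw [← this]; exact ha.1.2
  have hfb : f b ≤ N := by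
    have : g b = f b := by
      by_contra hne
      exact hb.2 (subset_toMeasurable _ _ (by simpa [ne_comm] using hne))
    rw [← this]; exact hb.1.2
  have : f z = f (a + (-b)) := by rw [← hab]; ring_nf
  rw [this]
  calc f (a + (-b)) ≤ 2 * f a * f (-b) := hL6 a (-b)
  _ = 2 * f a * f b := by rw [hL2]
  _ ≤ 2 * (N+1)^2 := by nlinarith [hpos a, hpos b, (hpos b).le, hfa, hfb]


omit hd in
include hpos in
private lemma L9 {δ B : ℝ} (hδ : 0 < δ) (hB : 1 ≤ B) (hbase : ∀ z, |z| ≤ δ → f z ≤ B)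
    (hL6 : ∀ x y, f (x+y) ≤ 2 * f x * f y) :
    ∀ k : ℕ, ∀ z : ℝ, |z| ≤ (k+1) * δ → f z ≤ (2*B)^(k+1) := by
  intro k
  induction k with
  | zero =>
    intro z hz
    calc f z ≤ B := hbase z (by simpa using hz)
    _ ≤ (2*B)^1 := by nlinarith
  | succ k ih =>
    intro z hz
    have hk2 : (0:ℝ) < (k:ℝ) + 2 := by positivity
    set w := z * (((k:ℝ)+1)/((k:ℝ)+2)) with hw
    set r := z * (1/((k:ℝ)+2)) with hr
    have hzwr : z = w + r := by
      rw [hw, hr]; field_simp; ring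
    have habsw : |w| ≤ ((k:ℝ)+1) * δ := by
      rw [hw, abs_mul, abs_of_pos (by positivity : (0:ℝ) < ((k:ℝ)+1)/((k:ℝ)+2))]
      push_cast at hz
      calc |z| * (((k:ℝ)+1)/((k:ℝ)+2)) ≤ (((k:ℝ)+1+1) * δ) * (((k:ℝ)+1)/((k:ℝ)+2)) := by
            apply mul_le_mul_of_nonneg_right hz (by positivity)
      _ = ((k:ℝ)+1) * δ := by field_simp; ring
    have habsr : |r| ≤ δ := by
      rw [hr, abs_mul, abs_of_pos (by positivity : (0:ℝ) < 1/((k:ℝ)+2))]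
      push_cast at hz
      calc |z| * (1/((k:ℝ)+2)) ≤ (((k:ℝ)+1+1) * δ) * (1/((k:ℝ)+2)) := by
            apply mul_le_mul_of_nonneg_right hz (by positivity)
      _ = δ := by field_simp; ring
    have h1 : f z ≤ 2 * f w * f r := by rw [hzwr]; exact hL6 w r
    have h2 : f w ≤ (2*B)^(k+1) := ih w habsw
    have h3 : f r ≤ B := hbase r habsr
    calc f z ≤ 2 * f w * f r := h1
    _ ≤ 2 * (2*B)^(k+1) * B := by nlinarith [hpos w, hpos r, (hpos w).le, (hpos r).le, pow_pos (by nlinarith : (0:ℝ) < 2*B) (k+1)]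
    _ = (2*B)^(k+2) := by rw [pow_succ]; ring
  
omit hd in
include hpos in
private lemma L10 (hf : NullMeasurable f (volume : Measure ℝ))
    {δ B : ℝ} (hδ : 0 < δ) (hB : 1 ≤ B)
    (hiter : ∀ k : ℕ, ∀ z : ℝ, |z| ≤ (k+1) * δ → f z ≤ (2*B)^(k+1)) :
    ∀ a b : ℝ, IntervalIntegrable f volume a b := by
  intro a b
  obtain ⟨k, hk⟩ := exists_nat_ge (max |a| |b| / δ)
  have hbound : ∀ z ∈ Set.uIoc a b, f z ≤ (2*B)^(k+1) := by
    intro z hz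
    apply hiter k z
    have hmin : -(max |a| |b|) ≤ a ⊓ b :=
      le_min (by linarith [neg_abs_le a, le_max_left |a| |b|])
        (by linarith [neg_abs_le b, le_max_right |a| |b|])
    have hmax : a ⊔ b ≤ max |a| |b| := max_le_max (le_abs_self a) (le_abs_self b)
    have h1 : |z| ≤ max |a| |b| := abs_le.2 ⟨by linarith [hz.1.le], by linarith [hz.2]⟩
    have h2 : max |a| |b| ≤ k * δ := by
      rw [div_le_iff₀ hδ] at hk; linarith
    have : (k:ℝ) * δ ≤ ((k:ℝ)+1) * δ := by nlinarith
    linarith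
  rw [intervalIntegrable_iff]
  apply Measure.integrableOn_of_bounded (M := (2*B)^(k+1))
  · rw [Set.uIoc]
    exact (measure_Ioc_lt_top).ne
  · exact hf.aemeasurable.aestronglyMeasurable
  · refine (ae_restrict_mem measurableSet_uIoc).mono ?_
    intro z hz
    rw [Real.norm_eq_abs, abs_of_pos (hpos z)]
    exact hbound z hz


omit hpos in
include hd in
private lemma L11 (hL4 : ∀ x, 1 ≤ f x)
    (hInt : ∀ a b : ℝ, IntervalIntegrable f volume a b) :
    Continuous f := by
  set C := ∫ y in (0:ℝ)..1, f y with hC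
  have hC1 : (1:ℝ) ≤ C := by
    have h := intervalIntegral.integral_mono_on (by norm_num : (0:ℝ) ≤ 1)
      (intervalIntegrable_const (c := (1:ℝ))) (hInt 0 1) (fun x _ => hL4 x)
    simpa using h
  have key : ∀ x, f x = ((∫ t in (0:ℝ)..(x+1), f t) - (∫ t in (0:ℝ)..(x-1), f t)) / (2*C) := by
    intro x
    have h2 : ∫ y in (0:ℝ)..1, (f (x+y) + f (x-y)) = ∫ y in (0:ℝ)..1, (2 * f x * f y) :=
      intervalIntegral.integral_congr (fun y _ => hd x y)
    have h1 : ∫ y in (0:ℝ)..1, (2 * f x * f y) = 2 * f x * C := by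
      rw [hC]
      exact intervalIntegral.integral_const_mul (2 * f x) f
    have h3 : ∫ y in (0:ℝ)..1, f (x+y) = ∫ t in x..(x+1), f t := by
      simpa using intervalIntegral.integral_comp_add_left f x
    have h4 : ∫ y in (0:ℝ)..1, f (x-y) = ∫ t in (x-1)..x, f t := by
      simpa using intervalIntegral.integral_comp_sub_left f x
    have hi1 : IntervalIntegrable (fun y => f (x+y)) volume 0 1 := by
      have := (hInt x (x+1)).comp_add_left x
      simpa using this
    have hi2 : IntervalIntegrable (fun y => f (x-y)) volume 0 1 := by
      have := (hInt x (x-1)).comp_sub_left x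
      simpa using this
    have hadd : ∫ y in (0:ℝ)..1, (f (x+y) + f (x-y))
        = (∫ y in (0:ℝ)..1, f (x+y)) + ∫ y in (0:ℝ)..1, f (x-y) :=
      intervalIntegral.integral_add hi1 hi2
    have hglue : (∫ t in (x-1)..x, f t) + (∫ t in x..(x+1), f t) = ∫ t in (x-1)..(x+1), f t :=
      intervalIntegral.integral_add_adjacent_intervals (hInt (x-1) x) (hInt x (x+1))
    have hglue2 : (∫ t in (0:ℝ)..(x-1), f t) + (∫ t in (x-1)..(x+1), f t) = ∫ t in (0:ℝ)..(x+1), f t :=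
      intervalIntegral.integral_add_adjacent_intervals (hInt 0 (x-1)) (hInt (x-1) (x+1))
    have hmain : 2 * f x * C = ∫ t in (x-1)..(x+1), f t := by
      rw [← h1, ← h2, hadd, h3, h4]
      linarith
    have hCpos : (0:ℝ) < 2 * C := by linarith
    field_simp
    nlinarith [hmain, hglue2]
  have hF : Continuous (fun b => ∫ t in (0:ℝ)..b, f t) :=
    intervalIntegral.continuous_primitive hInt 0
  have heq : f = fun x => ((∫ t in (0:ℝ)..(x+1), f t) - (∫ t in (0:ℝ)..(x-1), f t)) / (2*C) :=
    funext key
  rw [heq]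
  apply Continuous.div_const
  exact (hF.comp (continuous_id.add continuous_const)).sub
    (hF.comp (continuous_id.sub continuous_const))


end DAlembertAux

/-- If `f : ℝ → ℝ` is Lebesgue-measurable, strictly positive, and
satisfies the D'Alembert functional equation `f (x + y) + f (x - y) = 2 f x * f y`,
then `f x = cosh (λ x) = (exp (λ x) + exp (-λ x)) / 2` for all `x`, for some `λ`. -/
theorem dalembert_eq_cosh
    (f : ℝ → ℝ) (hf : NullMeasurable f (volume : Measure ℝ)) (hpos : ∀ x, 0 < f x)
    (hd : ∀ x y : ℝ, f (x + y) + f (x - y) = 2 * f x * f y) :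
    ∃ lam : ℝ, ∀ x : ℝ,
      f x = Real.cosh (lam * x) ∧
      f x = (Real.exp (lam * x) + Real.exp (-lam * x)) / 2 := by
  have h2 := L2 f hpos hd
  have h4 := L4 f hpos hd
  have h6 := L6 f hpos hd
  obtain ⟨δ, hδ, M, hM, hbase⟩ := L8 f hpos hf h2 h6
  have hiter := L9 f hpos hδ hM hbase h6
  have hInt := L10 f hpos hf hδ hM hiter
  have hcont : Continuous f := L11 f hd h4 hInt
  obtain ⟨lam, hlam0, hlam⟩ := cosh_exists (h4 1)
  have hq : ∀ q : ℚ, 0 ≤ q → f q = Real.cosh (lam * q) := by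
    intro q hq0
    have hden : (0:ℝ) < (q.den : ℝ) := by exact_mod_cast q.pos
    obtain ⟨μ, hμ0, hμ⟩ := cosh_exists (h4 (1 / (q.den : ℝ)))
    have h1 : f ((q.den : ℕ) * (1 / (q.den:ℝ))) = Real.cosh ((q.den : ℕ) * μ) :=
      L7 f hpos hd _ μ hμ.symm q.den
    have he1 : ((q.den : ℕ) : ℝ) * (1 / (q.den:ℝ)) = 1 := by field_simp
    rw [he1] at h1
    have hdl : ((q.den : ℕ) : ℝ) * μ = lam := by
      apply cosh_inj (by positivity) hlam0
      rw [← h1, hlam]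
    have hμval : μ = lam / (q.den : ℝ) := by
      field_simp
      linarith [hdl]
    have h2' := L7 f hpos hd (1/(q.den:ℝ)) μ hμ.symm q.num.toNat
    have hnum : ((q.num.toNat : ℕ) : ℝ) = (q.num : ℝ) := by
      have : 0 ≤ q.num := Rat.num_nonneg.2 hq0
      exact_mod_cast Int.toNat_of_nonneg this
    rw [hnum] at h2'
    have hcast : ((q : ℝ)) = (q.num : ℝ) * (1 / (q.den : ℝ)) := by
      rw [Rat.cast_def]; ring
    rw [← hcast] at h2'
    rw [h2', hμval]
    congr 1
    rw [hcast]
    field_simp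
  have hq' : ∀ q : ℚ, f q = Real.cosh (lam * q) := by
    intro q
    rcases le_or_gt 0 q with h | h
    · exact hq q h
    · have hneg := hq (-q) (by linarith)
      rw [Rat.cast_neg, h2, mul_neg, Real.cosh_neg] at hneg
      exact hneg
  have hcont2 : Continuous (fun x => Real.cosh (lam * x)) :=
    Real.continuous_cosh.comp (continuous_const.mul continuous_id)
  have hfe : f = fun x => Real.cosh (lam * x) := by
    apply hcont.ext_on (Rat.denseRange_cast (𝕜 := ℝ)) hcont2
    rintro x ⟨q, rfl⟩
    exact hq' q
  refine ⟨lam, fun x => ⟨by rw [hfe], ?_⟩⟩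
  rw [hfe]
  simp only [Real.cosh_eq, neg_mul]
end

section
/- For t > 0 and k ∈ ℕ define the heat Hermite polynomial H_k(t, x) = (−t)^k · e^{x²/(2t)} · (d^k/dx^k)[e^{−x²/(2t)}]. Then for every σ ∈ ℝ, every t > 0 and every x ∈ ℝ, the series ∑_{k=0}^∞ σ^k H_k(t, x)/k! converges and equals e^{σx − σ²t/2}. -/
/-- The heat Hermite polynomial
`H k t x = (-t) ^ k * exp (x ^ 2 / (2 t)) * (d^k/dx^k) (exp (-x ^ 2 / (2 t)))`. -/
noncomputable def heatHermite (k : ℕ) (t x : ℝ) : ℝ :=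
  (-t) ^ k * Real.exp (x ^ 2 / (2 * t)) *
    iteratedDeriv k (fun y => Real.exp (-(y ^ 2) / (2 * t))) x

/-- Iterated derivative of an entire function restricted to the reals. -/
lemma iteratedDeriv_comp_ofReal_aux (n : ℕ) (g : ℂ → ℂ) (hg : Differentiable ℂ g) (x : ℝ) :
    iteratedDeriv n (fun y : ℝ => g y) x = iteratedDeriv n g x := by
  induction n generalizing g with
  | zero => simp
  | succ n ih =>
    rw [iteratedDeriv_succ', iteratedDeriv_succ']
    rw [show deriv (fun y : ℝ => g y) = fun y : ℝ => deriv g y from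
      funext fun y => ((hg y).hasDerivAt.comp_ofReal).deriv]
    exact ih (deriv g) ((contDiff_infty_iff_deriv.mp hg.contDiff).2.differentiable (by simp))

/-- Iterated derivative commutes with `ofReal` for smooth functions. -/
lemma iteratedDeriv_ofReal_comp_aux (n : ℕ) (f : ℝ → ℝ) (hf : ContDiff ℝ (⊤ : ℕ∞) f) (x : ℝ) :
    iteratedDeriv n (fun y : ℝ => (f y : ℂ)) x = ((iteratedDeriv n f x : ℝ) : ℂ) := by
  induction n generalizing f with
  | zero => simp
  | succ n ih =>
    rw [iteratedDeriv_succ', iteratedDeriv_succ']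
    rw [show deriv (fun y : ℝ => (f y : ℂ)) = fun y : ℝ => ((deriv f y : ℝ) : ℂ) from
      funext fun y => ((hf.differentiable (by simp) y).hasDerivAt.ofReal_comp).deriv]
    exact ih (deriv f) (contDiff_infty_iff_deriv.mp hf).2

/-- For every `σ`, every `t > 0` and every `x`, the series
`∑ k, σ ^ k * H k t x / k!` converges and its sum equals `exp (σ x - σ ^ 2 t / 2)`. -/
theorem hasSum_heatHermite (σ t x : ℝ) (ht : 0 < t) :
    HasSum (fun k : ℕ => σ ^ k * heatHermite k t x / (Nat.factorial k))
      (Real.exp (σ * x - σ ^ 2 * t / 2)) := by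
  have ht' : t ≠ 0 := ne_of_gt ht
  set f : ℝ → ℝ := fun y => Real.exp (-(y ^ 2) / (2 * t)) with hfdef
  have hf : ContDiff ℝ (⊤ : ℕ∞) f := by
    apply Real.contDiff_exp.comp
    exact (contDiff_id.pow 2).neg.div_const _
  set g : ℂ → ℂ := fun z => Complex.exp (-(z ^ 2) / (2 * t)) with hgdef
  have hg : Differentiable ℂ g := by
    apply Complex.differentiable_exp.comp
    exact (differentiable_id.pow 2).neg.div_const _
  have hgr : ∀ n : ℕ, iteratedDeriv n g (x : ℂ) = ((iteratedDeriv n f x : ℝ) : ℂ) := by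
    intro n
    rw [← iteratedDeriv_comp_ofReal_aux n g hg x, ← iteratedDeriv_ofReal_comp_aux n f hf x]
    congr 1
    funext y
    simp only [hgdef, hfdef]
    push_cast
    ring_nf
  -- Taylor series of the entire function g
  have h1 := Complex.hasSum_taylorSeries_of_entire hg (x : ℂ) ((x : ℝ) - σ * t : ℝ)
  have h2 : HasSum (fun n : ℕ => ((Nat.factorial n : ℝ))⁻¹ * (-(σ * t)) ^ n *
      iteratedDeriv n f x) (f (x - σ * t)) := by
    rw [← Complex.hasSum_ofReal]
    convert h1 using 2 with n
    · rfl
    · rw [hgr n]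
      simp only [smul_eq_mul]
      push_cast
      ring
    · simp only [hgdef, hfdef]
      push_cast
      ring_nf
  have h3 := h2.mul_left (Real.exp (x ^ 2 / (2 * t)))
  have h4 : (fun k : ℕ => σ ^ k * heatHermite k t x / (Nat.factorial k)) =
      fun k : ℕ => Real.exp (x ^ 2 / (2 * t)) *
        (((Nat.factorial k : ℝ))⁻¹ * (-(σ * t)) ^ k * iteratedDeriv k f x) := by
    funext k
    have hk : (Nat.factorial k : ℝ) ≠ 0 := Nat.cast_ne_zero.mpr (Nat.factorial_ne_zero k)
    unfold heatHermite
    rw [show (fun y => Real.exp (-(y ^ 2) / (2 * t))) = f from rfl]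
    field_simp
    ring
  have h5 : Real.exp (σ * x - σ ^ 2 * t / 2) =
      Real.exp (x ^ 2 / (2 * t)) * f (x - σ * t) := by
    rw [hfdef, ← Real.exp_add]
    congr 1
    field_simp
    ring
  rw [h4, h5]
  exact h3
end
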